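/- Let A ∈ ℝ^{n×n}, B ∈ ℝ^{n×q}, assume A + A^T is negative definite on the kernel of B^T (x^T(A+A^T)x < 0 for every nonzero x with B^T x = 0), and let M := [[−(A+A^T), B],[B^T, 0]]. Let M = Q · blkdiag(Λ₊, Λ₋) · Q^T be an orthogonal eigendecomposition of M, where Λ₊ ∈ ℝ^{n×n} is diagonal containing the n positive eigenvalues of M and Λ₋ ∈ ℝ^{q×q} is diagonal containing the q negative eigenvalues. Partition the orthogonal matrix Q = [[Q₁₁, Q₁₂],[Q₂₁, Q₂₂]] with Q₁₁ ∈ ℝ^{n×n}; then Q₁₁ is nonsingular. Moreover, for any H₂ ∈ ℝ^{q×n} such that I − Q₁₂H₂ is nonsingular and α := ‖H₂ (I − Q₁₂ H₂)^{-1} Q₁₁‖₂² satisfies min λ(Λ₊) > α · max λ(|Λ₋|), the feedback matrix K := Q₂₁ Q₁₁^{-1} + (Q₂₂ − Q₂₁ Q₁₁^{-1} Q₁₂) H₂ is dissipating, i.e. (A−BK)+(A−BK)^T is negative definite. -/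

import Mathlib

open Matrix
open scoped Matrix.Norms.L2Operator

/-! With `v = (x, Kx)` the quadratic form of the saddle-point matrix is
`vᵀMv = -xᵀ((A - BK) + (A - BK)ᵀ)x`. The choice of `K` is exactly what makes
`v = Q(a, Wa)` with `a = Q₁₁⁻¹(I - Q₁₂H₂)x` and `W = H₂(I - Q₁₂H₂)⁻¹Q₁₁`, so
`vᵀMv = aᵀΛ₊a + (Wa)ᵀΛ₋(Wa) ≥ (min Λ₊ - ‖W‖² max |Λ₋|)‖a‖² > 0`.
The same computation shows that `Q₁₁` is nonsingular: a kernel vector `w` of `Q₁₁` gives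
`Q(w, 0) = (0, Q₂₁w)`, on which `M` vanishes since its lower-right block is zero, whereas
`wᵀΛ₊w > 0`. -/

section

variable {n q : Type*} [Fintype n] [Fintype q]

section CommRing

variable {R : Type*} [CommRing R]

def saddleMatrix (A : Matrix n n R) (B : Matrix n q R) : Matrix (n ⊕ q) (n ⊕ q) R :=
  fromBlocks (-(A + Aᵀ)) B Bᵀ 0

theorem sumElim_dotProduct_fromBlocks_mulVec (A : Matrix n n R) (B : Matrix n q R)
    (C : Matrix q n R) (D : Matrix q q R) (x : n → R) (y : q → R) :
    Sum.elim x y ⬝ᵥ (fromBlocks A B C D *ᵥ Sum.elim x y) =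
      x ⬝ᵥ (A *ᵥ x) + x ⬝ᵥ (B *ᵥ y) + (y ⬝ᵥ (C *ᵥ x) + y ⬝ᵥ (D *ᵥ y)) := by
  simp only [fromBlocks_mulVec, Sum.elim_comp_inl, Sum.elim_comp_inr,
    sumElim_dotProduct_sumElim, dotProduct_add]

theorem sumElim_zero_dotProduct_saddleMatrix_mulVec (A : Matrix n n R) (B : Matrix n q R)
    (y : q → R) : Sum.elim 0 y ⬝ᵥ (saddleMatrix A B *ᵥ Sum.elim 0 y) = 0 := by
  simp [saddleMatrix, sumElim_dotProduct_fromBlocks_mulVec]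

theorem sumElim_dotProduct_saddleMatrix_mulVec_feedback (A : Matrix n n R) (B : Matrix n q R)
    (K : Matrix q n R) (x : n → R) :
    Sum.elim x (K *ᵥ x) ⬝ᵥ (saddleMatrix A B *ᵥ Sum.elim x (K *ᵥ x)) =
      -(x ⬝ᵥ (((A - B * K) + (A - B * K)ᵀ) *ᵥ x)) := by
  have hBK : (K *ᵥ x) ⬝ᵥ (Bᵀ *ᵥ x) = x ⬝ᵥ ((B * K)ᵀ *ᵥ x) := by
    rw [transpose_mul, ← mulVec_mulVec, dotProduct_mulVec x, vecMul_transpose]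
  simp only [saddleMatrix, sumElim_dotProduct_fromBlocks_mulVec, hBK, zero_mulVec,
    dotProduct_zero, add_zero, ← mulVec_mulVec, neg_mulVec, add_mulVec, sub_mulVec,
    transpose_sub, dotProduct_neg, dotProduct_add, dotProduct_sub]
  ring

theorem dotProduct_mulVec_conj_of_transpose_mul_self_eq_one {m : Type*} [Fintype m]
    [DecidableEq m] {Q : Matrix m m R} (hQ : Qᵀ * Q = 1) (D : Matrix m m R) (u : m → R) :
    (Q *ᵥ u) ⬝ᵥ ((Q * D * Qᵀ) *ᵥ (Q *ᵥ u)) = u ⬝ᵥ (D *ᵥ u) := by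
  have hQu : Qᵀ *ᵥ (Q *ᵥ u) = u := by rw [mulVec_mulVec, hQ, one_mulVec]
  rw [← mulVec_mulVec, ← mulVec_mulVec, hQu, dotProduct_mulVec, ← mulVec_transpose, hQu]

variable [DecidableEq n]

theorem mulVec_sumElim_feedback {Q : Matrix (n ⊕ q) (n ⊕ q) R}
    (hQ : IsUnit Q.toBlocks₁₁.det) (H : Matrix q n R) (x : n → R) :
    Q *ᵥ Sum.elim (Q.toBlocks₁₁⁻¹ *ᵥ ((1 - Q.toBlocks₁₂ * H) *ᵥ x)) (H *ᵥ x) =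
      Sum.elim x ((Q.toBlocks₂₁ * Q.toBlocks₁₁⁻¹ +
        (Q.toBlocks₂₂ - Q.toBlocks₂₁ * Q.toBlocks₁₁⁻¹ * Q.toBlocks₁₂) * H) *ᵥ x) := by
  set P := Q.toBlocks₁₁⁻¹
  have hP : Q.toBlocks₁₁ * P = 1 := mul_nonsing_inv _ hQ
  have h₁ : Q.toBlocks₁₁ * (P * (1 - Q.toBlocks₁₂ * H)) + Q.toBlocks₁₂ * H = 1 := by
    rw [← Matrix.mul_assoc, hP, Matrix.one_mul, sub_add_cancel]
  have h₂ : Q.toBlocks₂₁ * (P * (1 - Q.toBlocks₁₂ * H)) + Q.toBlocks₂₂ * H =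
      Q.toBlocks₂₁ * P + (Q.toBlocks₂₂ - Q.toBlocks₂₁ * P * Q.toBlocks₁₂) * H := by
    simp only [Matrix.mul_sub, Matrix.sub_mul, Matrix.mul_one, Matrix.mul_assoc]
    abel
  nth_rw 1 [← fromBlocks_toBlocks Q]
  rw [fromBlocks_mulVec]
  simp only [Sum.elim_comp_inl, Sum.elim_comp_inr, mulVec_mulVec, ← add_mulVec, h₁, h₂,
    one_mulVec]

end CommRing

theorem isUnit_det_toBlocks₁₁_of_saddleMatrix_eq [DecidableEq n] [DecidableEq q]
    {A : Matrix n n ℝ} {B : Matrix n q ℝ} {Q : Matrix (n ⊕ q) (n ⊕ q) ℝ} (hQ : Qᵀ * Q = 1)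
    {P : Matrix n n ℝ} (hP : P.PosDef) (N : Matrix q q ℝ)
    (h : saddleMatrix A B = Q * fromBlocks P 0 0 N * Qᵀ) : IsUnit Q.toBlocks₁₁.det := by
  rw [isUnit_iff_ne_zero, Ne, ← exists_mulVec_eq_zero_iff]
  rintro ⟨w, hw, hQw⟩
  have hv : Q *ᵥ Sum.elim w 0 = Sum.elim (0 : n → ℝ) (Q.toBlocks₂₁ *ᵥ w) := by
    nth_rw 1 [← fromBlocks_toBlocks Q]
    rw [fromBlocks_mulVec]
    simp [hQw]
  have hquad := dotProduct_mulVec_conj_of_transpose_mul_self_eq_one hQ (fromBlocks P 0 0 N)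
    (Sum.elim w 0)
  rw [← h, hv, sumElim_zero_dotProduct_saddleMatrix_mulVec,
    sumElim_dotProduct_fromBlocks_mulVec] at hquad
  simp only [dotProduct_zero, zero_dotProduct, zero_mulVec, add_zero] at hquad
  have hpos := hP.dotProduct_mulVec_pos hw
  rw [star_trivial, ← hquad] at hpos
  exact lt_irrefl 0 hpos

theorem le_dotProduct_diagonal_mulVec {R : Type*} [CommRing R] [LinearOrder R]
    [IsStrictOrderedRing R] [DecidableEq n] {d : n → R} {c : R} (h : ∀ i, c ≤ d i) (w : n → R) :
    c * (w ⬝ᵥ w) ≤ w ⬝ᵥ (diagonal d *ᵥ w) := by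
  simp only [dotProduct, mulVec_diagonal, Finset.mul_sum]
  exact Finset.sum_le_sum fun i _ => by nlinarith [mul_self_nonneg (w i), h i]

theorem norm_euclideanSpace_equiv_symm_sq {m : Type*} [Fintype m] (v : m → ℝ) :
    ‖(EuclideanSpace.equiv m ℝ).symm v‖ ^ 2 = v ⬝ᵥ v := by
  rw [← real_inner_self_eq_norm_sq]
  rfl

theorem mulVec_dotProduct_mulVec_le [DecidableEq n] (W : Matrix q n ℝ) (a : n → ℝ) :
    (W *ᵥ a) ⬝ᵥ (W *ᵥ a) ≤ ‖W‖ ^ 2 * (a ⬝ᵥ a) := by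
  have h := l2_opNorm_mulVec W ((EuclideanSpace.equiv n ℝ).symm a)
  rw [← norm_euclideanSpace_equiv_symm_sq, ← norm_euclideanSpace_equiv_symm_sq, ← mul_pow]
  exact pow_le_pow_left₀ (norm_nonneg _) h 2

theorem mul_iSup_abs_lt_iInf {ι κ : Type*} [Finite ι] [Nonempty ι] [Finite κ] {f : ι → ℝ}
    {g : κ → ℝ} {α : ℝ} (hf : ∀ i, 0 < f i) (h : ∀ i j, α * |g j| < f i) :
    α * ⨆ j, |g j| < ⨅ i, f i := by
  obtain ⟨i, hi⟩ := exists_eq_ciInf_of_finite (f := f)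
  rw [← hi]
  rcases isEmpty_or_nonempty κ with hκ | hκ
  · simpa using hf i
  · obtain ⟨j, hj⟩ := exists_eq_ciSup_of_finite (f := fun j => |g j|)
    rw [← hj]
    exact h i j

theorem dotProduct_diagonal_mulVec_add_pos [DecidableEq n] [DecidableEq q] {dp : n → ℝ}
    {dm : q → ℝ} {W : Matrix q n ℝ} (hdp : ∀ i, 0 < dp i)
    (h : ∀ i j, ‖W‖ ^ 2 * |dm j| < dp i) {a : n → ℝ} (ha : a ≠ 0) :
    0 < a ⬝ᵥ (diagonal dp *ᵥ a) + (W *ᵥ a) ⬝ᵥ (diagonal dm *ᵥ (W *ᵥ a)) := by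
  have : Nonempty n := by
    obtain ⟨i, -⟩ := Function.ne_iff.1 ha
    exact ⟨i⟩
  set c := ⨅ i, dp i
  set C := ⨆ j, |dm j|
  have hc : ∀ i, c ≤ dp i := fun i => ciInf_le (Finite.bddBelow_range dp) i
  have hC : ∀ j, -C ≤ dm j := fun j =>
    neg_le_of_abs_le (le_ciSup (Finite.bddAbove_range fun j => |dm j|) j)
  have hC₀ : 0 ≤ C := Real.iSup_nonneg fun j => abs_nonneg (dm j)
  have haa : 0 < a ⬝ᵥ a := lt_of_le_of_ne (by simpa using dotProduct_star_self_nonneg a)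
    (by simpa [eq_comm] using ha)
  calc 0 < (c - ‖W‖ ^ 2 * C) * (a ⬝ᵥ a) :=
        mul_pos (sub_pos.2 (mul_iSup_abs_lt_iInf hdp h)) haa
    _ = c * (a ⬝ᵥ a) + -C * (‖W‖ ^ 2 * (a ⬝ᵥ a)) := by ring
    _ ≤ c * (a ⬝ᵥ a) + -C * ((W *ᵥ a) ⬝ᵥ (W *ᵥ a)) :=
        (add_le_add_iff_left _).2
          (mul_le_mul_of_nonpos_left (mulVec_dotProduct_mulVec_le W a) (neg_nonpos.2 hC₀))
    _ ≤ _ := add_le_add (le_dotProduct_diagonal_mulVec hc a)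
        (le_dotProduct_diagonal_mulVec hC (W *ᵥ a))

end

theorem new_parametrization_dissipates_general {n q : ℕ}
    (A : Matrix (Fin n) (Fin n) ℝ) (B : Matrix (Fin n) (Fin q) ℝ)
    (Q : Matrix (Fin n ⊕ Fin q) (Fin n ⊕ Fin q) ℝ)
    (horth : Qᵀ * Q = 1)
    (dp : Fin n → ℝ) (hdp : ∀ i, 0 < dp i)
    (dm : Fin q → ℝ)
    (hdecomp : Matrix.fromBlocks (-(A + Aᵀ)) B Bᵀ 0 =
      Q * Matrix.fromBlocks (Matrix.diagonal dp) 0 0 (Matrix.diagonal dm) * Qᵀ) :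
    IsUnit Q.toBlocks₁₁.det ∧
      ∀ H₂ : Matrix (Fin q) (Fin n) ℝ,
        IsUnit (1 - Q.toBlocks₁₂ * H₂).det →
        (∀ i j, ‖H₂ * (1 - Q.toBlocks₁₂ * H₂)⁻¹ * Q.toBlocks₁₁‖ ^ 2 * |dm j| < dp i) →
        ∀ x : Fin n → ℝ, x ≠ 0 →
          x ⬝ᵥ (((A - B * (Q.toBlocks₂₁ * Q.toBlocks₁₁⁻¹ +
              (Q.toBlocks₂₂ - Q.toBlocks₂₁ * Q.toBlocks₁₁⁻¹ * Q.toBlocks₁₂) * H₂)) +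
            (A - B * (Q.toBlocks₂₁ * Q.toBlocks₁₁⁻¹ +
              (Q.toBlocks₂₂ - Q.toBlocks₂₁ * Q.toBlocks₁₁⁻¹ * Q.toBlocks₁₂) * H₂))ᵀ) *ᵥ x) < 0 := by
  have hQ₁₁ : IsUnit Q.toBlocks₁₁.det :=
    isUnit_det_toBlocks₁₁_of_saddleMatrix_eq horth (posDef_diagonal_iff.2 hdp) _ hdecomp
  refine ⟨hQ₁₁, fun H₂ hT hα x hx => ?_⟩
  set T := 1 - Q.toBlocks₁₂ * H₂
  set a := Q.toBlocks₁₁⁻¹ *ᵥ (T *ᵥ x)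
  have ha : a ≠ 0 := by
    have hunit : IsUnit (Q.toBlocks₁₁⁻¹ * T) :=
      (isUnit_nonsing_inv_iff.2 ((isUnit_iff_isUnit_det _).2 hQ₁₁)).mul
        ((isUnit_iff_isUnit_det _).2 hT)
    simpa only [a, mulVec_mulVec, mulVec_zero] using
      (mulVec_injective_iff_isUnit.2 hunit).ne hx
  have hb : H₂ *ᵥ x = (H₂ * T⁻¹ * Q.toBlocks₁₁) *ᵥ a := by
    simp only [a, mulVec_mulVec, Matrix.mul_assoc, mul_nonsing_inv_cancel_left _ _ hQ₁₁,
      nonsing_inv_mul _ hT, Matrix.mul_one]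
  rw [← neg_pos, ← sumElim_dotProduct_saddleMatrix_mulVec_feedback,
    ← mulVec_sumElim_feedback hQ₁₁, saddleMatrix, hdecomp,
    dotProduct_mulVec_conj_of_transpose_mul_self_eq_one horth,
    sumElim_dotProduct_fromBlocks_mulVec, hb]
  simp only [zero_mulVec, dotProduct_zero, add_zero, zero_add]
  exact dotProduct_diagonal_mulVec_add_pos hdp hα ha

/-- Proposition on new parametrization: given an orthogonal
eigendecomposition `M = Q blkdiag(Λ₊, Λ₋) Qᵀ` of the saddle-point matrix, the block
`Q₁₁` is nonsingular, and for any `H₂` with `I − Q₁₂H₂` nonsingular and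
`α = ‖H₂(I − Q₁₂H₂)⁻¹Q₁₁‖₂²` satisfying `min λ(Λ₊) > α · max λ(|Λ₋|)`, the feedback
`K = Q₂₁Q₁₁⁻¹ + (Q₂₂ − Q₂₁Q₁₁⁻¹Q₁₂)H₂` is dissipating. -/
theorem new_parametrization_dissipates {n q : ℕ}
    (A : Matrix (Fin n) (Fin n) ℝ) (B : Matrix (Fin n) (Fin q) ℝ)
    (hker : ∀ x : Fin n → ℝ, x ≠ 0 → Bᵀ *ᵥ x = 0 → x ⬝ᵥ ((A + Aᵀ) *ᵥ x) < 0)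
    (Q : Matrix (Fin n ⊕ Fin q) (Fin n ⊕ Fin q) ℝ)
    (horth : Qᵀ * Q = 1)
    (dp : Fin n → ℝ) (hdp : ∀ i, 0 < dp i)
    (dm : Fin q → ℝ) (hdm : ∀ j, dm j < 0)
    (hdecomp : Matrix.fromBlocks (-(A + Aᵀ)) B Bᵀ 0 =
      Q * Matrix.fromBlocks (Matrix.diagonal dp) 0 0 (Matrix.diagonal dm) * Qᵀ) :
    IsUnit Q.toBlocks₁₁.det ∧
      ∀ H₂ : Matrix (Fin q) (Fin n) ℝ,
        IsUnit (1 - Q.toBlocks₁₂ * H₂).det →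
        (∀ i j, ‖H₂ * (1 - Q.toBlocks₁₂ * H₂)⁻¹ * Q.toBlocks₁₁‖ ^ 2 * |dm j| < dp i) →
        ∀ x : Fin n → ℝ, x ≠ 0 →
          x ⬝ᵥ (((A - B * (Q.toBlocks₂₁ * Q.toBlocks₁₁⁻¹ +
              (Q.toBlocks₂₂ - Q.toBlocks₂₁ * Q.toBlocks₁₁⁻¹ * Q.toBlocks₁₂) * H₂)) +
            (A - B * (Q.toBlocks₂₁ * Q.toBlocks₁₁⁻¹ +
              (Q.toBlocks₂₂ - Q.toBlocks₂₁ * Q.toBlocks₁₁⁻¹ * Q.toBlocks₁₂) * H₂))ᵀ) *ᵥ x) < 0 :=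
  new_parametrization_dissipates_general A B Q horth dp hdp dm hdecomp
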